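/- In O(n,n|Z), for i ≠ j one has the identity ν_{ij} = σ_{{i}} ρ(A) σ_{{i}}, where A ∈ GL(n,Z) maps e_i to e_i + e_j and fixes all other standard basis vectors, ν_{ij} is the map adding to the identity the rank-2 map sending f_i ↦ e_j, f_j ↦ -e_i and all other basis elements to 0, and σ_{{i}} swaps e_i with f_i fixing the rest. Consequently, the subgroup of O(n,n|Z) generated by σ_{{1}} and the elements ρ(A), A ∈ GL(n,Z), contains all ν_{ij}. -/

import Mathlib

open Module Matrix

noncomputable section

/-- `Rⁿ ⊕ (Rⁿ)*`, with the dual identified with `Rⁿ` via the standard basis. -/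
abbrev WW (n : ℕ) := (Fin n → ℝ) × (Fin n → ℝ)

/-- The canonical symmetric bilinear form on `Rⁿ ⊕ (Rⁿ)*`:
`(x+ξ, y+η) = (1/2)(⟨ξ,y⟩ + ⟨η,x⟩)`. -/
def bform (n : ℕ) : LinearMap.BilinForm ℝ (WW n) :=
  LinearMap.mk₂ ℝ (fun v w => (v.2 ⬝ᵥ w.1 + w.2 ⬝ᵥ v.1) / 2)
    (fun a b c => by
      simp [add_dotProduct, dotProduct_add]; ring)
    (fun r a b => by
      simp [smul_dotProduct, dotProduct_smul, smul_eq_mul]; ring)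
    (fun a b c => by
      simp [add_dotProduct, dotProduct_add]; ring)
    (fun r a b => by
      simp [smul_dotProduct, dotProduct_smul, smul_eq_mul]; ring)

/-- The involution `σ_I` of `Rⁿ ⊕ (Rⁿ)*` exchanging `e_i` with `f_i` for
`i ∈ I` and fixing all other basis vectors. -/
def sigmaMap {n : ℕ} (I : Finset (Fin n)) : WW n →ₗ[ℝ] WW n where
  toFun v := (fun i => if i ∈ I then v.2 i else v.1 i,
              fun i => if i ∈ I then v.1 i else v.2 i)
  map_add' a b := by
    refine Prod.ext ?_ ?_ <;> funext i <;> by_cases h : i ∈ I <;> simp [h]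
  map_smul' r a := by
    refine Prod.ext ?_ ?_ <;> funext i <;> by_cases h : i ∈ I <;> simp [h]

/-- The map `ρ(A) : (x,ξ) ↦ (Ax, (Aᵗ)⁻¹ξ)` on `Rⁿ ⊕ (Rⁿ)*`, for
`A ∈ GL(n,Z)`; here `(Aᵗ)⁻¹ = (A⁻¹)ᵗ`. -/
def rhoMap {n : ℕ} (A : GL (Fin n) ℤ) : WW n →ₗ[ℝ] WW n :=
  LinearMap.prod
    (((A : Matrix (Fin n) (Fin n) ℤ).map (Int.cast : ℤ → ℝ)).mulVecLin ∘ₗ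
      LinearMap.fst ℝ (Fin n → ℝ) (Fin n → ℝ))
    ((((A⁻¹ : GL (Fin n) ℤ) : Matrix (Fin n) (Fin n) ℤ)ᵀ.map (Int.cast : ℤ → ℝ)).mulVecLin ∘ₗ
      LinearMap.snd ℝ (Fin n → ℝ) (Fin n → ℝ))

/-- The generator `ν_{ij} : (x,ξ) ↦ (x + N ξ, ξ)`, where the rank-2 matrix `N`
sends `f_i ↦ e_j`, `f_j ↦ -e_i` and all other basis vectors to `0`. -/
def nuGen {n : ℕ} (i j : Fin n) : WW n →ₗ[ℝ] WW n :=
  LinearMap.prod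
    (LinearMap.fst ℝ (Fin n → ℝ) (Fin n → ℝ) +
      ((Matrix.single j i (1 : ℝ) - Matrix.single i j (1 : ℝ)).mulVecLin ∘ₗ
        LinearMap.snd ℝ (Fin n → ℝ) (Fin n → ℝ)))
    (LinearMap.snd ℝ (Fin n → ℝ) (Fin n → ℝ))

namespace NuAux

open Module Matrix

lemma sigma_sigma {n : ℕ} (I : Finset (Fin n)) :
    (sigmaMap I) * (sigmaMap I) = (1 : Module.End ℝ (WW n)) := by
  apply LinearMap.ext; intro v
  refine Prod.ext ?_ ?_ <;> funext k <;>
    by_cases h : k ∈ I <;> simp [sigmaMap, Module.End.mul_apply, h]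

def sigmaUnit {n : ℕ} (I : Finset (Fin n)) : (Module.End ℝ (WW n))ˣ :=
  ⟨sigmaMap I, sigmaMap I, sigma_sigma I, sigma_sigma I⟩

lemma map_cast_mul {n : ℕ} (M N : Matrix (Fin n) (Fin n) ℤ) :
    (M * N).map (Int.cast : ℤ → ℝ) = M.map Int.cast * N.map Int.cast := by
  simpa using Matrix.map_mul (L := M) (M := N) (f := Int.castRingHom ℝ)

lemma rho_mul {n : ℕ} (A B : GL (Fin n) ℤ) :
    rhoMap (A * B) = (rhoMap A) * (rhoMap B) := by
  apply LinearMap.ext; intro v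
  refine Prod.ext ?_ ?_ <;>
    simp [rhoMap, Module.End.mul_apply, Matrix.mulVec_mulVec, ← map_cast_mul,
      Units.val_mul, _root_.mul_inv_rev, Matrix.transpose_mul]

lemma rho_one {n : ℕ} : rhoMap (1 : GL (Fin n) ℤ) = (1 : Module.End ℝ (WW n)) := by
  apply LinearMap.ext; intro v
  refine Prod.ext ?_ ?_ <;>
    simp [rhoMap, Matrix.map_one (Int.cast : ℤ → ℝ) Int.cast_zero Int.cast_one]

def rhoUnit {n : ℕ} (A : GL (Fin n) ℤ) : (Module.End ℝ (WW n))ˣ :=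
  ⟨rhoMap A, rhoMap A⁻¹,
   by rw [← rho_mul, mul_inv_cancel, rho_one],
   by rw [← rho_mul, inv_mul_cancel, rho_one]⟩

lemma swap_mul_self {n : ℕ} (a b : Fin n) :
    ((Equiv.swap a b).permMatrix ℤ) * ((Equiv.swap a b).permMatrix ℤ) = 1 := by
  ext r s
  rw [PEquiv.toMatrix_toPEquiv_mul]
  simp [Matrix.submatrix_apply, PEquiv.toMatrix, Equiv.toPEquiv_apply,
    Equiv.swap_apply_self, Matrix.one_apply, eq_comm]

def swapGL {n : ℕ} (a b : Fin n) : GL (Fin n) ℤ :=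
  ⟨(Equiv.swap a b).permMatrix ℤ, (Equiv.swap a b).permMatrix ℤ,
    swap_mul_self a b, swap_mul_self a b⟩

@[simp] lemma swapGL_coe {n : ℕ} (a b : Fin n) :
    ((swapGL a b : GL (Fin n) ℤ) : Matrix (Fin n) (Fin n) ℤ) = (Equiv.swap a b).permMatrix ℤ := rfl

@[simp] lemma swapGL_inv_coe {n : ℕ} (a b : Fin n) :
    (((swapGL a b)⁻¹ : GL (Fin n) ℤ) : Matrix (Fin n) (Fin n) ℤ) = (Equiv.swap a b).permMatrix ℤ := rfl

lemma permMatrix_cast {n : ℕ} (σ : Equiv.Perm (Fin n)) :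
    (σ.permMatrix ℤ).map (Int.cast : ℤ → ℝ) = σ.permMatrix ℝ := by
  ext r s
  simp [Matrix.map_apply, PEquiv.toMatrix, apply_ite (Int.cast : ℤ → ℝ)]

lemma permMatrix_mulVec {n : ℕ} (σ : Equiv.Perm (Fin n)) (x : Fin n → ℝ) :
    (σ.permMatrix ℝ).mulVec x = fun r => x (σ r) := by
  funext r
  simp [Matrix.mulVec, dotProduct, PEquiv.toMatrix, Equiv.toPEquiv_apply]

lemma permMatrix_transpose_mulVec {n : ℕ} (a b : Fin n) (x : Fin n → ℝ) :
    ((Equiv.swap a b).permMatrix ℝ)ᵀ.mulVec x = fun r => x (Equiv.swap a b r) := by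
  funext r
  have h : ∀ s, ((Equiv.swap a b).permMatrix ℝ)ᵀ r s
      = (if r = Equiv.swap a b s then (1:ℝ) else 0) := by
    intro s
    simp [Matrix.transpose_apply, PEquiv.toMatrix, Equiv.toPEquiv_apply, eq_comm]
  simp only [Matrix.mulVec, dotProduct, h]
  rw [Finset.sum_eq_single (Equiv.swap a b r)]
  · simp [Equiv.swap_apply_self]
  · intro s _ hs
    rw [if_neg, zero_mul]
    intro hrs
    exact hs (by rw [hrs, Equiv.swap_apply_self])
  · simp

lemma sigma_conj {n : ℕ} (z i : Fin n) :
    sigmaMap {i} = rhoMap (swapGL z i) ∘ₗ sigmaMap {z} ∘ₗ rhoMap (swapGL z i) := by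
  apply LinearMap.ext; intro v
  have h1 : Equiv.swap z i i = z := Equiv.swap_apply_right z i
  have h2 : ∀ k : Fin n, k ≠ i → Equiv.swap z i k ≠ z := by
    intro k hk h
    exact hk (by simpa [Equiv.swap_apply_self, Equiv.swap_apply_left]
      using congrArg (Equiv.swap z i) h)
  refine Prod.ext ?_ ?_ <;> funext k <;>
    · simp only [LinearMap.comp_apply, rhoMap, sigmaMap, LinearMap.coe_mk, AddHom.coe_mk,
        LinearMap.prod_apply, Function.prod, LinearMap.fst_apply, LinearMap.snd_apply,
        Matrix.mulVecLin_apply, swapGL_coe, swapGL_inv_coe, Matrix.transpose_map,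
        permMatrix_cast, permMatrix_mulVec, permMatrix_transpose_mulVec, Finset.mem_singleton]
      by_cases hk : k = i
      · simp [hk, h1, Equiv.swap_apply_self, Equiv.swap_apply_right]
      · simp [hk, h2 k hk, Equiv.swap_apply_self]

end NuAux


/-- for `i ≠ j`, one has `ν_{ij} = σ_{{i}} ∘ ρ(A) ∘ σ_{{i}}`,
where `A ∈ GL(n,Z)` maps `e_i` to `e_i + e_j` and fixes the other standard
basis vectors; consequently the subgroup generated by `σ_{{1}}` and the
`ρ(A)`'s contains every `ν_{ij}`. -/
theorem nu_eq_sigma_rho_sigma_and_in_closure {n : ℕ} (i j : Fin n) (hij : i ≠ j)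
    (A : GL (Fin n) ℤ)
    (hA : ∀ k : Fin n, (A : Matrix (Fin n) (Fin n) ℤ).mulVec (Pi.single k 1) =
      if k = i then Pi.single i 1 + Pi.single j 1 else Pi.single k 1) :
    nuGen i j = sigmaMap {i} ∘ₗ rhoMap A ∘ₗ sigmaMap {i} ∧
    ∃ u ∈ Subgroup.closure {u : (Module.End ℝ (WW n))ˣ |
        (u : Module.End ℝ (WW n)) = sigmaMap {(⟨0, i.pos⟩ : Fin n)} ∨
        ∃ B : GL (Fin n) ℤ, (u : Module.End ℝ (WW n)) = rhoMap B},
      (u : Module.End ℝ (WW n)) = nuGen i j := by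
  classical
  have hAmat : (A : Matrix (Fin n) (Fin n) ℤ) = 1 + Matrix.single j i 1 := by
    ext r s
    have h := congrFun (hA s) r
    rw [Matrix.mulVec_single] at h
    rcases eq_or_ne s i with rfl | hs
    · rcases eq_or_ne r j with rfl | hr
      · simpa [Matrix.one_apply, Matrix.single, Pi.single_apply,
          Matrix.add_apply, hij.symm, Ne.symm hij] using h
      · simpa [Matrix.one_apply, Matrix.single, Pi.single_apply,
          Matrix.add_apply, hr, Ne.symm hr] using h
    · simpa [Matrix.one_apply, Matrix.single, Pi.single_apply, hs,
        Ne.symm hs, Matrix.add_apply] using h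
  have hEE : (Matrix.single j i (1:ℤ)) * Matrix.single j i 1 = 0 :=
    Matrix.single_mul_single_of_ne (c := (1:ℤ)) j i j hij 1
  have hmul : (A : Matrix (Fin n) (Fin n) ℤ) * (1 - Matrix.single j i 1) = 1 := by
    rw [hAmat, mul_sub, mul_one, add_mul, one_mul, hEE]
    abel
  have hinv : ((A⁻¹ : GL (Fin n) ℤ) : Matrix (Fin n) (Fin n) ℤ)
      = 1 - Matrix.single j i 1 :=
    Units.inv_eq_of_mul_eq_one_right hmul
  have hAr : ((A : Matrix (Fin n) (Fin n) ℤ).map (Int.cast : ℤ → ℝ))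
      = 1 + Matrix.single j i (1:ℝ) := by
    rw [hAmat]; ext r s
    simp [Matrix.map_apply, Matrix.one_apply, Matrix.single, Matrix.add_apply,
      apply_ite (Int.cast : ℤ → ℝ)]
  have hAir : ((((A⁻¹ : GL (Fin n) ℤ) : Matrix (Fin n) (Fin n) ℤ))ᵀ.map (Int.cast : ℤ → ℝ))
      = 1 - Matrix.single i j (1:ℝ) := by
    rw [hinv]; ext r s
    simp [Matrix.map_apply, Matrix.one_apply, Matrix.single, Matrix.sub_apply,
      Matrix.transpose_apply, apply_ite (Int.cast : ℤ → ℝ), and_comm, eq_comm]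
  have key : nuGen i j = sigmaMap {i} ∘ₗ rhoMap A ∘ₗ sigmaMap {i} := by
    apply LinearMap.ext; intro v
    refine Prod.ext ?_ ?_ <;> funext k <;>
      · simp only [nuGen, sigmaMap, rhoMap, LinearMap.comp_apply, LinearMap.prod_apply,
          Function.prod, LinearMap.coe_mk, AddHom.coe_mk, LinearMap.fst_apply, LinearMap.snd_apply,
          LinearMap.add_apply, Matrix.mulVecLin_apply, hAr, hAir, Finset.mem_singleton,
          Matrix.add_mulVec, Matrix.sub_mulVec, Matrix.one_mulVec,
          Matrix.single_mulVec, Pi.add_apply, Pi.sub_apply, Function.update_apply,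
          Pi.zero_apply, one_mul]
        by_cases hk : k = i <;> by_cases hk2 : k = j <;>
          simp [hk, hk2, hij, Ne.symm hij, Function.update_apply, sub_eq_add_neg]
  refine ⟨key, ?_⟩
  set z : Fin n := ⟨0, i.pos⟩ with hz
  refine ⟨NuAux.rhoUnit (NuAux.swapGL z i) * NuAux.sigmaUnit {z} * NuAux.rhoUnit (NuAux.swapGL z i)
      * NuAux.rhoUnit A * NuAux.rhoUnit (NuAux.swapGL z i) * NuAux.sigmaUnit {z}
      * NuAux.rhoUnit (NuAux.swapGL z i), ?_, ?_⟩
  · have hrho : ∀ B : GL (Fin n) ℤ, NuAux.rhoUnit B ∈ Subgroup.closure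
        {u : (Module.End ℝ (WW n))ˣ |
          (u : Module.End ℝ (WW n)) = sigmaMap {(⟨0, i.pos⟩ : Fin n)} ∨
          ∃ B : GL (Fin n) ℤ, (u : Module.End ℝ (WW n)) = rhoMap B} :=
      fun B => Subgroup.subset_closure (Or.inr ⟨B, rfl⟩)
    have hsig : NuAux.sigmaUnit {z} ∈ Subgroup.closure
        {u : (Module.End ℝ (WW n))ˣ |
          (u : Module.End ℝ (WW n)) = sigmaMap {(⟨0, i.pos⟩ : Fin n)} ∨
          ∃ B : GL (Fin n) ℤ, (u : Module.End ℝ (WW n)) = rhoMap B} :=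
      Subgroup.subset_closure (Or.inl rfl)
    exact mul_mem (mul_mem (mul_mem (mul_mem (mul_mem (mul_mem (hrho _) hsig) (hrho _))
      (hrho _)) (hrho _)) hsig) (hrho _)
  · rw [key, NuAux.sigma_conj z i]
    simp only [Units.val_mul, NuAux.rhoUnit, NuAux.sigmaUnit, Module.End.mul_eq_comp,
      LinearMap.comp_assoc]
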